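/- Let T_n be the Schur covering group of S_n with the section u : S_n → T_n defined on cycles by u_{(a_1,...,a_k)} := [a_1 a_k][a_1 a_{k-1}]⋯[a_1 a_2] (a_1 minimal in its cycle) and extended multiplicatively over disjoint cycles ordered by smallest element. Then for every σ ∈ S_n and every transposition (r s) with r < s: σ ▷ u_{(rs)} = u_{σ(rs)σ^{-1}} z^{ε(σ)} if σ(r) < σ(s), and σ ▷ u_{(rs)} = u_{σ(rs)σ^{-1}} z^{ε(σ)+1} if σ(r) > σ(s). -/

import Mathlib

/-- Generators of the Schur covering group `T_n` of `S_n`: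
`Sum.inl r` is the generator `t_r` (for `0 ≤ r < n-1`, lifting the transposition
`(r, r+1)`), and `Sum.inr ()` is the central generator `z`. -/
abbrev TGen (n : ℕ) := Sum (Fin (n - 1)) Unit

/-- The defining relators of `T_n`: `z² = 1`, `t_r² = 1`, `t_r t_s = t_s t_r z` for
`|r − s| > 1`, the braid relations `t_r t_{r+1} t_r = t_{r+1} t_r t_{r+1}`, and
`z t_r = t_r z`. -/
def TnRels (n : ℕ) : Set (FreeGroup (TGen n)) :=
  {w | w = (FreeGroup.of (Sum.inr () : TGen n)) ^ 2 ∨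
    (∃ r : Fin (n - 1), w = (FreeGroup.of (Sum.inl r : TGen n)) ^ 2) ∨
    (∃ r s : Fin (n - 1), ((r : ℕ) + 1 < (s : ℕ) ∨ (s : ℕ) + 1 < (r : ℕ)) ∧
      w = FreeGroup.of (Sum.inl r : TGen n) * FreeGroup.of (Sum.inl s : TGen n) *
        (FreeGroup.of (Sum.inl s : TGen n) * FreeGroup.of (Sum.inl r : TGen n) *
          FreeGroup.of (Sum.inr () : TGen n))⁻¹) ∨
    (∃ r s : Fin (n - 1), (s : ℕ) = (r : ℕ) + 1 ∧
      w = FreeGroup.of (Sum.inl r : TGen n) * FreeGroup.of (Sum.inl s : TGen n) *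
          FreeGroup.of (Sum.inl r : TGen n) *
        (FreeGroup.of (Sum.inl s : TGen n) * FreeGroup.of (Sum.inl r : TGen n) *
          FreeGroup.of (Sum.inl s : TGen n))⁻¹) ∨
    (∃ r : Fin (n - 1),
      w = FreeGroup.of (Sum.inr () : TGen n) * FreeGroup.of (Sum.inl r : TGen n) *
        (FreeGroup.of (Sum.inl r : TGen n) * FreeGroup.of (Sum.inr () : TGen n))⁻¹)}

/-- The Schur covering group `T_n` of the symmetric group `S_n`. -/
abbrev Tn (n : ℕ) := PresentedGroup (TnRels n)

/-- The central element `z` of `T_n`. -/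
def tz (n : ℕ) : Tn n := PresentedGroup.of (Sum.inr ())

/-- The generator `t_r` of `T_n` (indexed from `0`; junk value `1` if `r ≥ n-1`). -/
def tt (n : ℕ) (r : ℕ) : Tn n :=
  if h : r < n - 1 then PresentedGroup.of (Sum.inl ⟨r, h⟩) else 1

/-- The distinguished lift `[r s] ∈ T_n` of the transposition `(r s)` (0-indexed),
defined recursively by `[r, r+1] = t_r`, `[r s] = t_r [r+1, s] t_r z` for
`r + 1 < s`, and `[r s] = [s r] z` for `r > s`. -/
def bk (n : ℕ) (r s : ℕ) : Tn n :=
  if _ : r + 1 = s then tt n r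
  else if _ : r + 1 < s then tt n r * bk n (r + 1) s * tt n r * tz n
  else if _ : s < r then bk n s r * tz n
  else 1
termination_by 2 * (max r s - min r s) + (r - s)
decreasing_by all_goals omega
namespace Stmt14Aux

variable {n : ℕ}

lemma rel_one {w : FreeGroup (TGen n)} (hw : w ∈ TnRels n) :
    PresentedGroup.mk (TnRels n) w = 1 :=
  (QuotientGroup.eq_one_iff w).2 (Subgroup.subset_normalClosure hw)

lemma zsq : tz n * tz n = 1 := by
  have h := rel_one (n := n) (Or.inl rfl)
  rw [map_pow] at h
  rwa [pow_two] at h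

lemma tsq (r : ℕ) : tt n r * tt n r = 1 := by
  unfold tt
  by_cases h : r < n - 1
  · rw [dif_pos h]
    have h2 := rel_one (n := n) (Or.inr (Or.inl ⟨⟨r, h⟩, rfl⟩))
    rw [map_pow] at h2
    rwa [pow_two] at h2
  · rw [dif_neg h, one_mul]

lemma zinv : (tz n)⁻¹ = tz n := inv_eq_of_mul_eq_one_right zsq

lemma tinv (r : ℕ) : (tt n r)⁻¹ = tt n r := inv_eq_of_mul_eq_one_right (tsq r)

lemma mk_of (x : TGen n) :
    PresentedGroup.mk (TnRels n) (FreeGroup.of x) = PresentedGroup.of x := rfl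

lemma of_inl (j : Fin (n - 1)) : PresentedGroup.of (Sum.inl j) = tt n (j : ℕ) := by
  simp [tt, j.isLt]

lemma tcomm {r s : ℕ} (hr : r < n - 1) (hs : s < n - 1) (h : r + 1 < s ∨ s + 1 < r) :
    tt n r * tt n s = tt n s * tt n r * tz n := by
  have h1 := rel_one (n := n) (Or.inr (Or.inr (Or.inl ⟨⟨r, hr⟩, ⟨s, hs⟩, h, rfl⟩)))
  rw [map_mul, map_inv, map_mul, map_mul] at h1
  rw [mul_inv_eq_one] at h1
  simpa [mk_of, of_inl, tz] using h1

lemma braid {r : ℕ} (h : r + 2 < n) :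
    tt n r * tt n (r + 1) * tt n r = tt n (r + 1) * tt n r * tt n (r + 1) := by
  have hr : r < n - 1 := by omega
  have hs : r + 1 < n - 1 := by omega
  have h1 := rel_one (n := n)
    (Or.inr (Or.inr (Or.inr (Or.inl ⟨⟨r, hr⟩, ⟨r + 1, hs⟩, rfl, rfl⟩))))
  rw [map_mul, map_inv, map_mul, map_mul, map_mul] at h1
  rw [mul_inv_eq_one] at h1
  simpa [mk_of, of_inl] using h1

lemma zcomm (g : Tn n) : tz n * g = g * tz n := by
  induction g using PresentedGroup.induction_on with
  | _ w =>
    induction w using FreeGroup.induction_on with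
    | C1 => simp [map_one]
    | of x =>
      cases x with
      | inl j =>
        have hj : PresentedGroup.mk (TnRels n) (FreeGroup.of (Sum.inl j)) = tt n (j : ℕ) :=
          of_inl j
        rw [hj]
        have h1 := rel_one (n := n) (Or.inr (Or.inr (Or.inr (Or.inr ⟨j, rfl⟩))))
        rw [map_mul, map_inv, map_mul] at h1
        rw [mul_inv_eq_one] at h1
        simpa [mk_of, of_inl, tz] using h1
      | inr u => rfl
    | inv_of x ih =>
      rw [map_inv]
      exact Commute.inv_right ih
    | mul x y ihx ihy =>
      rw [map_mul]
      exact Commute.mul_right ihx ihy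

end Stmt14Aux
namespace Stmt14Aux

variable {n : ℕ}

lemma bk_adj {r s : ℕ} (h : r + 1 = s) : bk n r s = tt n r := by
  rw [bk, dif_pos h]

lemma bk_step {r s : ℕ} (h : r + 1 < s) :
    bk n r s = tt n r * bk n (r + 1) s * tt n r * tz n := by
  rw [bk, dif_neg (by omega), dif_pos h]

lemma z_push (g : Tn n) : tz n * g = g * tz n := zcomm g

lemma zz_cancel (g : Tn n) : tz n * (tz n * g) = g := by
  rw [← mul_assoc, zsq, one_mul]

lemma tt_cancel (r : ℕ) (g : Tn n) : tt n r * (tt n r * g) = g := by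
  rw [← mul_assoc, tsq, one_mul]

lemma single_far {k j : ℕ} (hk : k < n - 1) (hj : j < n - 1) (h : k + 1 < j ∨ j + 1 < k) :
    tt n k * tt n j * tt n k = tt n j * tz n := by
  rw [tcomm hk hj h]
  simp only [mul_assoc, z_push, tt_cancel, tsq, mul_one]

lemma conj3z {t a b : Tn n} (ht : t * t = 1) :
    t * (a * b * a * tz n) * t = (t * a * t) * (t * b * t) * (t * a * t) * tz n := by
  have tc : ∀ g : Tn n, t * (t * g) = g := fun g => by rw [← mul_assoc, ht, one_mul]
  simp only [mul_assoc, z_push, tc]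

lemma step_conj {t a b a' b' : Tn n} (ht : t * t = 1) (ha : t * a * t = a' * tz n)
    (hb : t * b * t = b' * tz n) :
    t * (a * b * a * tz n) * t = (a' * b' * a' * tz n) * tz n := by
  rw [conj3z ht, ha, hb]
  simp only [mul_assoc, z_push, zz_cancel, zsq, mul_one]

/-- Conjugation by a far-away generator: gains a `z`. -/
lemma L1 {k r s : ℕ} (hk : k < n - 1) (hs : s < n) (hrs : r < s) (hfar : k + 1 < r ∨ s < k) :
    tt n k * bk n r s * tt n k = bk n r s * tz n := by
  rcases eq_or_lt_of_le (Nat.succ_le_of_lt hrs) with h | h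
  · rw [bk_adj h]
    exact single_far hk (by omega) (by omega)
  · rw [bk_step h]
    have ha : tt n k * tt n r * tt n k = tt n r * tz n :=
      single_far hk (by omega) (by omega)
    have hb : tt n k * bk n (r + 1) s * tt n k = bk n (r + 1) s * tz n :=
      L1 hk hs (by omega) (by omega)
    rw [step_conj (tsq k) ha hb]
termination_by s - r

/-- Conjugation by the leading generator. -/
lemma L2 {r s : ℕ} (h : r + 1 < s) :
    tt n r * bk n r s * tt n r = bk n (r + 1) s * tz n := by
  rw [bk_step h]
  simp only [mul_assoc, z_push, tt_cancel, tsq, mul_one]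

/-- Conjugation by `t_k` sends `[k+1, s]` to `[k, s] z`. -/
lemma L3 {k s : ℕ} (h : k + 1 < s) :
    tt n k * bk n (k + 1) s * tt n k = bk n k s * tz n := by
  rw [bk_step h]
  simp only [mul_assoc, z_push, tt_cancel, zz_cancel, zsq, mul_one]

/-- Conjugation by `t_s` sends `[r, s]` to `[r, s+1] z`. -/
lemma L4 {r s : ℕ} (hrs : r < s) (hs : s + 1 < n) :
    tt n s * bk n r s * tt n s = bk n r (s + 1) * tz n := by
  rcases eq_or_lt_of_le (Nat.succ_le_of_lt hrs) with h | h
  · -- braid case : s = r + 1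
    subst h
    rw [bk_adj rfl, bk_step (by omega), bk_adj rfl]
    have hb := braid (n := n) (r := r) (by omega)
    simp only [mul_assoc, z_push, zz_cancel, zsq, mul_one]
    simp only [← mul_assoc]
    exact hb.symm
  · rw [bk_step h, bk_step (by omega : r + 1 < s + 1)]
    have ha : tt n s * tt n r * tt n s = tt n r * tz n :=
      single_far (by omega) (by omega) (by omega)
    have hb : tt n s * bk n (r + 1) s * tt n s = bk n (r + 1) (s + 1) * tz n :=
      L4 (by omega) hs
    rw [step_conj (tsq s) ha hb]
termination_by s - r

/-- Conjugation by `t_s` sends `[r, s+1]` to `[r, s] z`. -/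
lemma L5 {r s : ℕ} (hrs : r < s) (hs : s + 1 < n) :
    tt n s * bk n r (s + 1) * tt n s = bk n r s * tz n := by
  have h4 := L4 hrs hs
  have : bk n r (s + 1) = tt n s * bk n r s * tt n s * tz n := by
    rw [h4]
    simp only [mul_assoc, z_push, zz_cancel, zsq, mul_one]
  rw [this]
  simp only [mul_assoc, z_push, tt_cancel, tsq, mul_one]

/-- Conjugation by an interior generator: gains a `z`. -/
lemma L6 {k r s : ℕ} (hr : r < k) (hks : k + 1 < s) (hs : s < n) :
    tt n k * bk n r s * tt n k = bk n r s * tz n := by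
  rcases eq_or_lt_of_le (Nat.succ_le_of_lt hr) with h | h
  · -- braid case : k = r + 1
    subst h
    rw [bk_step (by omega : r + 1 < s), bk_step (by omega : r + 1 + 1 < s)]
    -- goal about t₁ * (t₀ * (t₁ * B₂ * t₁ * z) * t₀ * z) * t₁ = ... * z
    have hbr := braid (n := n) (r := r) (by omega)
    have hB : tt n r * bk n (r + 2) s * tt n r = bk n (r + 2) s * tz n :=
      L1 (n := n) (k := r) (r := r + 2) (s := s) (by omega) hs (by omega) (by omega)
    have tc0 := tt_cancel (n := n) r
    have tc1 := tt_cancel (n := n) (r + 1)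
    -- normalize
    simp only [mul_assoc, z_push, zz_cancel, zsq, mul_one, tc0, tc1]
    -- now pure word identity; use braid on prefix and suffix
    have hbr3 : ∀ g : Tn n, tt n (r+1) * (tt n r * (tt n (r+1) * g)) =
        tt n r * (tt n (r+1) * (tt n r * g)) := by
      intro g
      rw [← mul_assoc, ← mul_assoc, ← hbr]
      simp only [mul_assoc]
    rw [hbr3]
    have hbr2 : tt n (r + 1) * (tt n r * tt n (r + 1)) =
        tt n r * (tt n (r + 1) * tt n r) := by
      simp only [← mul_assoc]; exact hbr.symm
    have hB3 : ∀ g : Tn n, tt n r * (bk n (r + 1 + 1) s * (tt n r * g)) =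
        bk n (r + 1 + 1) s * (tz n * g) := by
      intro g
      rw [← mul_assoc, ← mul_assoc]
      rw [show bk n (r + 1 + 1) s = bk n (r + 2) s from rfl, hB]
      simp only [mul_assoc]
    simp only [Nat.succ_eq_add_one]
    rw [hbr2, hB3]
    simp only [mul_assoc, z_push]
  · rw [bk_step (by omega : r + 1 < s)]
    have ha : tt n k * tt n r * tt n k = tt n r * tz n :=
      single_far (by omega) (by omega) (by omega)
    have hb : tt n k * bk n (r + 1) s * tt n k = bk n (r + 1) s * tz n :=
      L6 h hks hs
    rw [step_conj (tsq k) ha hb]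
termination_by k - r

end Stmt14Aux
namespace Stmt14Aux

variable {n : ℕ}

/-- `z^{ε(σ)}` as an element of `T_n`. -/
def zeps (n : ℕ) (σ : Equiv.Perm (Fin n)) : Tn n :=
  if Equiv.Perm.sign σ = 1 then 1 else tz n

lemma zeps_one : zeps n 1 = 1 := by simp [zeps]

lemma zeps_inv (σ : Equiv.Perm (Fin n)) : zeps n σ⁻¹ = zeps n σ := by
  simp [zeps, Equiv.Perm.sign_inv]

lemma zeps_mul (σ₁ σ₂ : Equiv.Perm (Fin n)) :
    zeps n (σ₁ * σ₂) = zeps n σ₁ * zeps n σ₂ := by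
  rcases Int.units_eq_one_or (Equiv.Perm.sign σ₁) with h1 | h1 <;>
    rcases Int.units_eq_one_or (Equiv.Perm.sign σ₂) with h2 | h2 <;>
    simp [zeps, map_mul, h1, h2, zsq]

lemma zeps_sq (σ : Equiv.Perm (Fin n)) : zeps n σ * zeps n σ = 1 := by
  unfold zeps; split <;> simp [zsq]

lemma zeps_push (σ : Equiv.Perm (Fin n)) (g : Tn n) : zeps n σ * g = g * zeps n σ := by
  unfold zeps; split
  · simp
  · exact z_push g

lemma zeps_swap {x y : Fin n} (h : x ≠ y) : zeps n (Equiv.swap x y) = tz n := by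
  simp [zeps, Equiv.Perm.sign_swap h]

lemma zeps_pow (σ : Equiv.Perm (Fin n)) :
    zeps n σ = tz n ^ (if Equiv.Perm.sign σ = 1 then 0 else 1) := by
  unfold zeps; split <;> simp

/-- The key conjugation property, as a predicate on `g ∈ T_n`. -/
def PP (n : ℕ) (p : Tn n →* Equiv.Perm (Fin n)) (g : Tn n) : Prop :=
  ∀ r s : Fin n, r < s →
    (p g r < p g s → g * bk n r s * g⁻¹ = bk n (p g r) (p g s) * zeps n (p g)) ∧
    (p g s < p g r → g * bk n r s * g⁻¹ = bk n (p g s) (p g r) * zeps n (p g) * tz n)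

lemma central_conj (g C : Tn n) (hc : ∀ y, C * y = y * C) : g⁻¹ * C * g = C := by
  rw [mul_assoc, hc g, ← mul_assoc, inv_mul_cancel, one_mul]

lemma conj_solve {g B D C : Tn n} (hc : ∀ y, C * y = y * C) (hCC : C * C = 1)
    (E : g * B * g⁻¹ = D * C) : g⁻¹ * D * g = B * C := by
  have e2 : g * B * g⁻¹ * C = D := by rw [E, mul_assoc, hCC, mul_one]
  rw [← e2, show g⁻¹ * (g * B * g⁻¹ * C) * g = B * (g⁻¹ * C * g) from by group,
    central_conj g C hc]

lemma conj_mulc {g B D : Tn n} (C : Tn n) (hc : ∀ y, C * y = y * C)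
    (E : g * B * g⁻¹ = D) : g * (B * C) * g⁻¹ = D * C := by
  rw [show g * (B * C) * g⁻¹ = g * B * (C * g⁻¹) from by group, hc, ← mul_assoc, E]

variable (p : Tn n →* Equiv.Perm (Fin n))

lemma PP_inv {g : Tn n} (h : PP n p g) : PP n p g⁻¹ := by
  intro r s hrs
  simp only [map_inv, inv_inv]
  have hz1 : ∀ y : Tn n, zeps n (p g) * y = y * zeps n (p g) := zeps_push _
  have hz2 : ∀ y : Tn n, zeps n (p g) * tz n * y = y * (zeps n (p g) * tz n) := by
    intro y
    rw [mul_assoc, z_push, ← mul_assoc, hz1, mul_assoc]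
  have hzz2 : zeps n (p g) * tz n * (zeps n (p g) * tz n) = 1 := by
    simp only [mul_assoc, z_push, zz_cancel, zsq, mul_one]
    exact zeps_sq _
  rcases lt_trichotomy ((p g)⁻¹ r) ((p g)⁻¹ s) with hlt | heq | hgt
  · have E := (h _ _ hlt).1 (by simpa using hrs)
    rw [show (p g) ((p g)⁻¹ r) = r from (p g).apply_symm_apply r,
      show (p g) ((p g)⁻¹ s) = s from (p g).apply_symm_apply s] at E
    constructor
    · intro _
      rw [zeps_inv]
      exact conj_solve hz1 (zeps_sq _) E
    · intro hc
      exact absurd hc (not_lt.2 hlt.le)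
  · exact absurd (by simpa using congrArg (p g) heq : r = s) hrs.ne
  · have E := (h _ _ hgt).2 (by simpa using hrs)
    rw [show (p g) ((p g)⁻¹ r) = r from (p g).apply_symm_apply r,
      show (p g) ((p g)⁻¹ s) = s from (p g).apply_symm_apply s] at E
    constructor
    · intro hc
      exact absurd hc (not_lt.2 hgt.le)
    · intro _
      rw [zeps_inv]
      exact (conj_solve hz2 hzz2 (E.trans (mul_assoc _ _ _))).trans
        (mul_assoc _ _ _).symm

end Stmt14Aux
namespace Stmt14Aux

variable {n : ℕ} (p : Tn n →* Equiv.Perm (Fin n))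

lemma PP_mul {g1 g2 : Tn n} (h1 : PP n p g1) (h2 : PP n p g2) : PP n p (g1 * g2) := by
  intro r s hrs
  simp only [map_mul, Equiv.Perm.mul_apply, mul_inv_rev]
  have hz1 : ∀ σ : Equiv.Perm (Fin n), ∀ y : Tn n,
      zeps n σ * y = y * zeps n σ := fun σ => zeps_push σ
  have hsplit : ∀ B : Tn n, g1 * g2 * B * (g2⁻¹ * g1⁻¹) = g1 * (g2 * B * g2⁻¹) * g1⁻¹ := by
    intro B; group
  have hne : p g2 r ≠ p g2 s := fun hh => hrs.ne ((p g2).injective hh)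
  rcases hne.lt_or_gt with hlt | hgt
  · have E2 := (h2 r s hrs).1 hlt
    have hne1 : p g1 (p g2 r) ≠ p g1 (p g2 s) := fun hh => hne ((p g1).injective hh)
    rcases hne1.lt_or_gt with hlt1 | hgt1
    · have E1 := (h1 _ _ hlt).1 hlt1
      constructor
      · intro _
        rw [hsplit, E2, conj_mulc _ (hz1 _) E1, zeps_mul]
        simp only [mul_assoc, z_push, zz_cancel, zsq, mul_one]
      · intro hc
        exact absurd hc (not_lt.2 hlt1.le)
    · have E1 := (h1 _ _ hlt).2 hgt1
      constructor
      · intro hc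
        exact absurd hc (not_lt.2 hgt1.le)
      · intro _
        rw [hsplit, E2, conj_mulc _ (hz1 _) E1, zeps_mul]
        simp only [mul_assoc, z_push, zz_cancel, zsq, mul_one]
  · have E2 := (h2 r s hrs).2 hgt
    have hne1 : p g1 (p g2 s) ≠ p g1 (p g2 r) := fun hh => hne.symm ((p g1).injective hh)
    rcases hne1.lt_or_gt with hlt1 | hgt1
    · -- σ₁σ₂ s < σ₁σ₂ r : flip branch of goal
      have E1 := (h1 _ _ hgt).1 hlt1
      constructor
      · intro hc
        exact absurd hc (not_lt.2 hlt1.le)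
      · intro _
        have E2' : g2 * bk n r s * g2⁻¹ =
            bk n (p g2 s) (p g2 r) * (zeps n (p g2) * tz n) := by
          rw [E2, mul_assoc]
        rw [hsplit, E2', conj_mulc _ ?hc E1, zeps_mul]
        · simp only [mul_assoc, z_push, zz_cancel, zsq, mul_one]
        case hc =>
          intro y
          rw [mul_assoc, z_push, ← mul_assoc, hz1, mul_assoc]
    · -- σ₁σ₂ r < σ₁σ₂ s
      have E1 := (h1 _ _ hgt).2 hgt1
      constructor
      · intro _
        have E2' : g2 * bk n r s * g2⁻¹ =
            bk n (p g2 s) (p g2 r) * (zeps n (p g2) * tz n) := by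
          rw [E2, mul_assoc]
        rw [hsplit, E2', conj_mulc _ ?hc E1, zeps_mul]
        · simp only [mul_assoc, z_push, zz_cancel, zsq, mul_one]
        case hc =>
          intro y
          rw [mul_assoc, z_push, ← mul_assoc, hz1, mul_assoc]
      · intro hc
        exact absurd hc (not_lt.2 hgt1.le)

end Stmt14Aux
namespace Stmt14Aux

variable {n : ℕ} (p : Tn n →* Equiv.Perm (Fin n))

lemma PP_gen (hp : ∀ (r : ℕ) (h : r + 1 < n),
      p (tt n r) = Equiv.swap ⟨r, Nat.lt_of_succ_lt h⟩ ⟨r + 1, h⟩)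
    (k : ℕ) (hk : k + 1 < n) : PP n p (tt n k) := by
  intro r s hrs
  have hkn : k < n - 1 := by omega
  obtain ⟨a, b, hpg, hav, hbv⟩ : ∃ a b : Fin n,
      p (tt n k) = Equiv.swap a b ∧ (a : ℕ) = k ∧ (b : ℕ) = k + 1 :=
    ⟨_, _, hp k hk, rfl, rfl⟩
  have hab : a ≠ b := Fin.ne_of_val_ne (by omega)
  have hrsv : (r : ℕ) < (s : ℕ) := hrs
  have hsn : (s : ℕ) < n := s.isLt
  simp only [hpg, tinv]
  rw [zeps_swap hab]
  by_cases hra : (r : ℕ) = k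
  · by_cases hsb : (s : ℕ) = k + 1
    · -- r = a, s = b : the flip case
      have hr' : r = a := Fin.ext (by omega)
      have hs' : s = b := Fin.ext (by omega)
      rw [hr', hs', Equiv.swap_apply_left, Equiv.swap_apply_right]
      constructor
      · intro hcon
        rw [Fin.lt_def] at hcon
        omega
      · intro _
        rw [hav, hbv, bk_adj rfl, tsq, one_mul, mul_assoc, zsq, mul_one]
    · -- r = a, s untouched
      have hr' : r = a := Fin.ext (by omega)
      have e1 : Equiv.swap a b r = b := by rw [hr', Equiv.swap_apply_left]
      have e2 : Equiv.swap a b s = s :=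
        Equiv.swap_apply_of_ne_of_ne (Fin.ne_of_val_ne (by omega))
          (Fin.ne_of_val_ne (by omega))
      rw [e1, e2, hra, hbv]
      constructor
      · intro _
        exact L2 (by omega)
      · intro hcon
        rw [Fin.lt_def] at hcon
        omega
  · by_cases hrb : (r : ℕ) = k + 1
    · -- r = b, s untouched
      have hr' : r = b := Fin.ext (by omega)
      have e1 : Equiv.swap a b r = a := by rw [hr', Equiv.swap_apply_right]
      have e2 : Equiv.swap a b s = s :=
        Equiv.swap_apply_of_ne_of_ne (Fin.ne_of_val_ne (by omega))
          (Fin.ne_of_val_ne (by omega))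
      rw [e1, e2, hrb, hav]
      constructor
      · intro _
        exact L3 (by omega)
      · intro hcon
        rw [Fin.lt_def] at hcon
        omega
    · by_cases hsa : (s : ℕ) = k
      · -- s = a, r untouched
        have hs' : s = a := Fin.ext (by omega)
        have e2 : Equiv.swap a b s = b := by rw [hs', Equiv.swap_apply_left]
        have e1 : Equiv.swap a b r = r :=
          Equiv.swap_apply_of_ne_of_ne (Fin.ne_of_val_ne (by omega))
            (Fin.ne_of_val_ne (by omega))
        rw [e1, e2, hsa, hbv]
        constructor
        · intro _
          exact L4 (by omega) hk
        · intro hcon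
          rw [Fin.lt_def] at hcon
          omega
      · by_cases hsb : (s : ℕ) = k + 1
        · -- s = b, r untouched (r < k here)
          have hs' : s = b := Fin.ext (by omega)
          have e2 : Equiv.swap a b s = a := by rw [hs', Equiv.swap_apply_right]
          have e1 : Equiv.swap a b r = r :=
            Equiv.swap_apply_of_ne_of_ne (Fin.ne_of_val_ne (by omega))
              (Fin.ne_of_val_ne (by omega))
          rw [e1, e2, hsb, hav]
          constructor
          · intro _
            exact L5 (by omega) hk
          · intro hcon
            rw [Fin.lt_def] at hcon
            omega
        · -- both r and s untouched
          have e1 : Equiv.swap a b r = r :=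
            Equiv.swap_apply_of_ne_of_ne (Fin.ne_of_val_ne (by omega))
              (Fin.ne_of_val_ne (by omega))
          have e2 : Equiv.swap a b s = s :=
            Equiv.swap_apply_of_ne_of_ne (Fin.ne_of_val_ne (by omega))
              (Fin.ne_of_val_ne (by omega))
          rw [e1, e2]
          constructor
          · intro _
            rcases (by omega : k + 1 < (r : ℕ) ∨ (s : ℕ) < k ∨
                ((r : ℕ) < k ∧ k + 1 < (s : ℕ))) with h | h | h
            · exact L1 hkn hsn hrsv (Or.inl h)
            · exact L1 hkn hsn hrsv (Or.inr h)
            · exact L6 h.1 h.2 hsn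
          · intro hcon
            rw [Fin.lt_def] at hcon
            omega

lemma PP_one : PP n p 1 := by
  intro r s hrs
  simp only [map_one, Equiv.Perm.coe_one, id_eq, one_mul, inv_one, mul_one, zeps_one]
  exact ⟨fun _ => trivial, fun hc => absurd hc (not_lt.2 hrs.le)⟩

lemma PP_z (hz : p (tz n) = 1) : PP n p (tz n) := by
  intro r s hrs
  simp only [hz, Equiv.Perm.coe_one, id_eq, zeps_one, mul_one]
  constructor
  · intro _
    rw [zinv, z_push, mul_assoc, zsq, mul_one]
  · intro hc
    exact absurd hc (not_lt.2 hrs.le)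

lemma PP_all (hp : ∀ (r : ℕ) (h : r + 1 < n),
      p (tt n r) = Equiv.swap ⟨r, Nat.lt_of_succ_lt h⟩ ⟨r + 1, h⟩)
    (hz : p (tz n) = 1) : ∀ g, PP n p g := by
  intro g
  induction g using PresentedGroup.induction_on with
  | _ w =>
    induction w using FreeGroup.induction_on with
    | C1 => rw [map_one]; exact PP_one p
    | of x =>
      cases x with
      | inl j =>
        have h := PP_gen p hp (j : ℕ) (by have := j.isLt; omega)
        show PP n p (PresentedGroup.of (Sum.inl j))
        rwa [of_inl j]
      | inr u =>
        show PP n p (tz n)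
        exact PP_z p hz
    | inv_of x ih => rw [map_inv]; exact PP_inv p ih
    | mul x y ihx ihy => rw [map_mul]; exact PP_mul p ihx ihy

end Stmt14Aux
open Stmt14Aux in

/-- The section `u : S_n → T_n` on a transposition `(r s)` with `r < s` is `[r s]`.
For every `σ ∈ S_n` (with lift `τ`, conjugation `σ ▷ ν = τ ν τ⁻¹`):
`σ ▷ u_{(rs)} = u_{σ(rs)σ⁻¹} z^{ε(σ)}` if `σ(r) < σ(s)`, and
`σ ▷ u_{(rs)} = u_{σ(rs)σ⁻¹} z^{ε(σ)+1}` if `σ(r) > σ(s)`; here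
`u_{σ(rs)σ⁻¹}` is `[min{σr,σs}  max{σr,σs}]`. -/
theorem stmt14 (n : ℕ) (p : Tn n →* Equiv.Perm (Fin n))
    (hp : ∀ (r : ℕ) (h : r + 1 < n),
      p (tt n r) = Equiv.swap ⟨r, by omega⟩ ⟨r + 1, h⟩)
    (hz : p (tz n) = 1)
    (σ : Equiv.Perm (Fin n)) (τ : Tn n) (hτ : p τ = σ)
    (r s : Fin n) (hrs : r < s) :
    (σ r < σ s → τ * bk n r s * τ⁻¹ =
      bk n (σ r) (σ s) * tz n ^ (if Equiv.Perm.sign σ = 1 then 0 else 1)) ∧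
    (σ s < σ r → τ * bk n r s * τ⁻¹ =
      bk n (σ s) (σ r) * tz n ^ ((if Equiv.Perm.sign σ = 1 then 0 else 1) + 1)) := by
  subst hτ
  have H := PP_all p hp hz τ r s hrs
  refine ⟨fun h => ?_, fun h => ?_⟩
  · rw [← zeps_pow]
    exact H.1 h
  · rw [pow_succ, ← zeps_pow, ← mul_assoc]
    exact H.2 h
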